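/- Let H be a finite type, par : H → H, and r ∈ H with par(r) = r, such that for every h ∈ H there exists n ∈ ℕ with par^[n](h) = r. For h ∈ H, call the set children(h) = { h' ∈ H : par(h') = h and h' ≠ h } the children of h, and call h a leaf if children(h) = ∅. Let p : H → ℝ be nonnegative and suppose that for every non-leaf h ∈ H, ∑_{h' ∈ children(h)} p(h') = 1. Let reach : H → ℝ be the (unique) function satisfying reach(r) = 1 and reach(h) = reach(par(h)) · p(h) for every h ≠ r. Then ∑_{z leaf of H} reach(z) = 1. -/

import Mathlib

/-- In a finite rooted tree where the edge probabilities out of every non-leaf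
node sum to one, the reach probabilities of the leaves sum to one. -/
theorem leaf_reach_probabilities_sum_to_one {H : Type*} [Fintype H] [DecidableEq H]
    (par : H → H) (r : H) (hr : par r = r)
    (hroot : ∀ h, ∃ n : ℕ, par^[n] h = r)
    (p : H → ℝ) (hp : ∀ h, 0 ≤ p h)
    (hchild : ∀ h : H,
      (Finset.univ.filter fun h' => par h' = h ∧ h' ≠ h) ≠ ∅ →
        ∑ h' ∈ Finset.univ.filter (fun h' => par h' = h ∧ h' ≠ h), p h' = 1)
    (reach : H → ℝ) (hreachr : reach r = 1)
    (hreach : ∀ h : H, h ≠ r → reach h = reach (par h) * p h) :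
    ∑ z ∈ Finset.univ.filter
        (fun z => (Finset.univ.filter fun h' => par h' = z ∧ h' ≠ z) = ∅),
      reach z = 1 := by
  classical
  -- depth
  set d : H → ℕ := fun h => Nat.find (hroot h) with hd
  have hdspec : ∀ h, par^[d h] h = r := fun h => Nat.find_spec (hroot h)
  have hiter_r : ∀ k, par^[k] r = r := fun k => Function.iterate_fixed hr k
  have hd_child : ∀ c h : H, par c = h → c ≠ h → d h < d c := by
    intro c h hpc hne
    have hcr : c ≠ r := by
      rintro rfl; rw [hr] at hpc; exact hne hpc
    have hdc : d c ≠ 0 := by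
      intro h0
      have := hdspec c
      rw [h0] at this
      simp at this
      exact hcr this
    have h1 : par^[d c - 1] h = r := by
      have := hdspec c
      rw [show d c = (d c - 1) + 1 from (Nat.succ_pred_eq_of_ne_zero hdc).symm,
        Function.iterate_succ_apply, hpc] at this
      exact this
    have : d h ≤ d c - 1 := Nat.find_le h1
    omega
  have hd_iter : ∀ (h : H) (k : ℕ), d (par^[k] h) ≤ d h := by
    intro h k
    apply Nat.find_le
    show par^[d h] (par^[k] h) = r
    rw [← Function.iterate_add_apply, Nat.add_comm, Function.iterate_add_apply,
      hdspec, hiter_r]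
  set sub : H → Finset H := fun h => Finset.univ.filter (fun z => ∃ n, par^[n] z = h)
    with hsub
  have hmemsub : ∀ z h : H, z ∈ sub h ↔ ∃ n, par^[n] z = h := by
    intro z h; simp [hsub]
  have hself : ∀ h : H, h ∈ sub h := fun h => (hmemsub h h).2 ⟨0, rfl⟩
  set isLeaf : H → Prop :=
    fun z => (Finset.univ.filter fun h' => par h' = z ∧ h' ≠ z) = ∅ with hisLeaf
  have key : ∀ (n : ℕ) (h : H), (sub h).card ≤ n →
      ∑ z ∈ (sub h).filter (fun z => isLeaf z), reach z = reach h := by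
    intro n
    induction n with
    | zero =>
      intro h hcard
      exact absurd (Finset.card_eq_zero.mp (Nat.le_zero.mp hcard)) 
        (Finset.nonempty_iff_ne_empty.mp ⟨h, hself h⟩)
    | succ n ih =>
      intro h hcard
      by_cases hleaf : isLeaf h
      · -- leaf case: sub h = {h}
        have hsubh : sub h = {h} := by
          apply Finset.Subset.antisymm
          · intro z hz
            obtain ⟨m, hm⟩ := (hmemsub z h).1 hz
            -- show par^[k] z = h for all k ≤ m by downward induction
            have step : ∀ x : H, par x = h → x = h := by
              intro x hx
              by_contra hxne
              have : x ∈ (Finset.univ.filter fun h' => par h' = h ∧ h' ≠ h) := by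
                simp [hx, hxne]
              rw [hisLeaf] at hleaf
              simp [hleaf] at this
            have : ∀ k : ℕ, par^[k] z = h → z = h := by
              intro k
              induction k with
              | zero => intro hk; simpa using hk
              | succ k ihk =>
                intro hk
                rw [Function.iterate_succ_apply'] at hk
                exact ihk (step _ hk)
            simp [this m hm]
          · intro z hz
            simp only [Finset.mem_singleton] at hz
            subst hz; exact hself z
        rw [hsubh]
        rw [Finset.filter_singleton, if_pos hleaf, Finset.sum_singleton]
      · -- non-leaf case
        set C : Finset H := Finset.univ.filter (fun h' => par h' = h ∧ h' ≠ h) with hC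
        have hCne : C ≠ ∅ := hleaf
        have hCmem : ∀ c, c ∈ C ↔ par c = h ∧ c ≠ h := by intro c; simp [hC]
        -- the leaves of sub h are partitioned among the children subtrees
        have haux : ∀ c c' : H, c ∈ C → c' ∈ C → ∀ a b : ℕ, a ≤ b →
            ∀ z : H, par^[a] z = c → par^[b] z = c' → c = c' := by
          intro c c' hc hc' a b hab z ha hb
          obtain ⟨hpc, hcneh⟩ := (hCmem c).1 hc
          obtain ⟨hpc', hcneh'⟩ := (hCmem c').1 hc'
          have : par^[b - a] c = c' := by
            rw [← ha, ← Function.iterate_add_apply]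
            rw [show b - a + a = b from by omega]
            exact hb
          rcases Nat.eq_zero_or_pos (b - a) with h0 | hpos
          · rw [h0] at this; simpa using this
          · exfalso
            rw [show b - a = (b - a - 1) + 1 from by omega,
              Function.iterate_succ_apply, hpc] at this
            have h1 : d c' ≤ d h := this ▸ hd_iter h (b - a - 1)
            have h2 : d h < d c' := hd_child c' h hpc' hcneh'
            omega
        have hdisj : (C : Set H).PairwiseDisjoint
            (fun c => (sub c).filter (fun z => isLeaf z)) := by
          intro c hc c' hc' hne
          apply Finset.disjoint_left.mpr
          intro z hz hz'
          have hzc := Finset.mem_of_mem_filter z hz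
          have hzc' := Finset.mem_of_mem_filter z hz'
          obtain ⟨a, ha⟩ := (hmemsub z c).1 hzc
          obtain ⟨b, hb⟩ := (hmemsub z c').1 hzc'
          rcases le_total a b with hab | hab
          · exact hne (haux c c' (Finset.mem_coe.mp hc) (Finset.mem_coe.mp hc') a b hab z ha hb)
          · exact hne ((haux c' c (Finset.mem_coe.mp hc') (Finset.mem_coe.mp hc) b a hab z hb ha).symm)
        have hpart : (sub h).filter (fun z => isLeaf z)
            = C.biUnion (fun c => (sub c).filter (fun z => isLeaf z)) := by
          ext z
          simp only [Finset.mem_filter, Finset.mem_biUnion]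
          constructor
          · rintro ⟨hzs, hzl⟩
            obtain ⟨m, hm⟩ := (hmemsub z h).1 hzs
            have hzeh : z ≠ h := by rintro rfl; exact hleaf hzl
            have hex : ∃ k, par^[k] z = h := ⟨m, hm⟩
            set k := Nat.find hex with hk
            have hkspec : par^[k] z = h := Nat.find_spec hex
            have hkne : k ≠ 0 := by
              intro h0; rw [h0] at hkspec; exact hzeh (by simpa using hkspec)
            set c := par^[k - 1] z with hcdef
            have hpc : par c = h := by
              have h2 : par^[(k - 1) + 1] z = h := by
                rw [show k - 1 + 1 = k from by omega]; exact hkspec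
              rw [Function.iterate_succ_apply'] at h2
              exact h2
            have hcneh : c ≠ h := by
              intro heq
              exact Nat.find_min hex (show k - 1 < k from by omega) heq
            refine ⟨c, (hCmem c).2 ⟨hpc, hcneh⟩, (hmemsub z c).2 ⟨k - 1, rfl⟩, hzl⟩
          · rintro ⟨c, hc, hzc, hzl⟩
            obtain ⟨a, ha⟩ := (hmemsub z c).1 hzc
            obtain ⟨hpc, -⟩ := (hCmem c).1 hc
            exact ⟨(hmemsub z h).2 ⟨a + 1, by
              rw [Function.iterate_succ_apply', ha, hpc]⟩, hzl⟩
        rw [hpart, Finset.sum_biUnion hdisj]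
        have hsumc : ∀ c ∈ C, ∑ z ∈ (sub c).filter (fun z => isLeaf z), reach z
            = reach h * p c := by
          intro c hc
          obtain ⟨hpc, hcneh⟩ := (hCmem c).1 hc
          have hsubset : sub c ⊆ sub h := by
            intro z hz
            obtain ⟨a, ha⟩ := (hmemsub z c).1 hz
            exact (hmemsub z h).2 ⟨a + 1, by rw [Function.iterate_succ_apply', ha, hpc]⟩
          have hnotmem : h ∉ sub c := by
            intro hmem
            obtain ⟨a, ha⟩ := (hmemsub h c).1 hmem
            have h1 : d c ≤ d h := ha ▸ hd_iter h a
            have h2 : d h < d c := hd_child c h hpc hcneh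
            omega
          have hlt : (sub c).card < (sub h).card :=
            Finset.card_lt_card (Finset.ssubset_iff_of_subset hsubset
              |>.mpr ⟨h, hself h, hnotmem⟩)
          have hcr : c ≠ r := by
            rintro rfl
            exact hcneh (by rw [← hpc, hr])
          rw [ih c (by omega), hreach c hcr, hpc]
        rw [Finset.sum_congr rfl hsumc, ← Finset.mul_sum, hchild h hCne, mul_one]
  -- conclude
  have hsubr : sub r = Finset.univ := by
    apply Finset.eq_univ_of_forall
    intro z
    exact (hmemsub z r).2 (hroot z)
  have := key (Fintype.card H) r (by simp [Finset.card_le_univ])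
  rw [hsubr, hreachr] at this
  exact this
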